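/- (Second Griffiths / Kelly–Sherman inequality.) Let Λ be a nonempty finite set, β ≥ 0, and let J assign to every subset A ⊆ Λ a nonnegative real J_A ≥ 0. Define the Gibbs expectation with weights exp(β·Σ_{A⊆Λ} J_A σ_A) over spin configurations σ : Λ → {−1, +1}. Then for all subsets B, C ⊆ Λ: ⟨σ_B σ_C⟩ − ⟨σ_B⟩⟨σ_C⟩ ≥ 0. -/

import Mathlib

open Finset

/-- The spin value (±1) associated to a Boolean configuration. -/
noncomputable def spin {Λ : Type*} (s : Λ → Bool) : Λ → ℝ :=
  fun p => if s p then 1 else -1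

/-- Boltzmann weight for a general many-body ferromagnetic interaction:
`exp(β·Σ_{A⊆Λ} J_A σ_A)`. -/
noncomputable def griffWeight {Λ : Type*} [Fintype Λ] [DecidableEq Λ]
    (β : ℝ) (J : Finset Λ → ℝ) (s : Λ → Bool) : ℝ :=
  Real.exp (β * ∑ A : Finset Λ, J A * ∏ p ∈ A, spin s p)

/-- Gibbs expectation for a general many-body interaction. -/
noncomputable def griffExpect {Λ : Type*} [Fintype Λ] [DecidableEq Λ]
    (β : ℝ) (J : Finset Λ → ℝ) (f : (Λ → ℝ) → ℝ) : ℝ :=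
  (∑ s : Λ → Bool, f (spin s) * griffWeight β J s) / ∑ s : Λ → Bool, griffWeight β J s

/-! Ginibre's duplication argument. With `W` the Boltzmann weight, substituting `σ' = στ` in the
double sum over pairs of configurations gives
`Z² (⟨σ_B σ_C⟩ - ⟨σ_B⟩⟨σ_C⟩) = ∑_τ (1 - τ_C) ∑_σ σ_{B∆C} W(σ) W(στ)`,
and `W(σ) W(στ) = exp (∑_A β J_A (1 + τ_A) σ_A)` is again a ferromagnetic weight. Each inner sum
is therefore nonnegative by the first Griffiths inequality, which follows from
`exp (K σ_A) = σ_A sinh K + cosh K`: the weight becomes a nonnegative combination of monomials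
`σ_E`, and `∑_σ σ_E ≥ 0` because it factors over the sites into factors `0` or `2`. -/

open scoped symmDiff

theorem Finset.prod_mul_prod_eq_prod_symmDiff {ι M : Type*} [DecidableEq ι] [CommMonoid M]
    {f : ι → M} (hf : ∀ i, f i * f i = 1) (A B : Finset ι) :
    (∏ i ∈ A, f i) * ∏ i ∈ B, f i = ∏ i ∈ A ∆ B, f i := by
  have hsq : (∏ i ∈ A ∩ B, f i) * ∏ i ∈ A ∩ B, f i = 1 := by
    rw [← prod_mul_distrib]; exact prod_eq_one fun i _ => hf i
  rw [← prod_union_inter, ← prod_sdiff (inter_subset_union (s := A) (t := B)),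
    symmDiff_eq_sup_sdiff_inf, mul_assoc, hsq, mul_one]
  rfl

lemma Real.exp_mul_eq_sinh_mul_add_cosh {t : ℝ} (ht : t = 1 ∨ t = -1) (x : ℝ) :
    Real.exp (x * t) = Real.sinh x * t + Real.cosh x := by
  rcases ht with rfl | rfl
  · rw [mul_one, mul_one, add_comm, Real.cosh_add_sinh]
  · rw [mul_neg_one, mul_neg_one, neg_add_eq_sub, Real.cosh_sub_sinh]

namespace Griffiths

variable {Λ : Type*}

/-- The spin monomial `σ_A`. -/
noncomputable def spinProd (A : Finset Λ) (s : Λ → Bool) : ℝ := ∏ p ∈ A, spin s p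

def configMul (s q : Λ → Bool) : Λ → Bool := fun p => s p == q p

lemma spin_mul_self (s : Λ → Bool) (p : Λ) : spin s p * spin s p = 1 := by
  cases h : s p <;> simp [spin, h]

lemma spin_configMul (s q : Λ → Bool) (p : Λ) :
    spin (configMul s q) p = spin s p * spin q p := by
  cases hs : s p <;> cases hq : q p <;> simp [configMul, spin, hs, hq]

lemma configMul_involutive (s : Λ → Bool) : Function.Involutive (configMul s) := by
  intro q; funext p; cases hs : s p <;> cases hq : q p <;> simp [configMul, hs, hq]

lemma spinProd_configMul (A : Finset Λ) (s q : Λ → Bool) :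
    spinProd A (configMul s q) = spinProd A s * spinProd A q := by
  simp only [spinProd, spin_configMul, prod_mul_distrib]

lemma spinProd_eq_one_or_eq_neg_one (A : Finset Λ) (s : Λ → Bool) :
    spinProd A s = 1 ∨ spinProd A s = -1 :=
  mul_self_eq_one_iff.mp <| by
    rw [spinProd, ← prod_mul_distrib]; exact prod_eq_one fun p _ => spin_mul_self s p

lemma spinProd_le_one (A : Finset Λ) (s : Λ → Bool) : spinProd A s ≤ 1 := by
  rcases spinProd_eq_one_or_eq_neg_one A s with h | h <;> norm_num [h]

lemma neg_one_le_spinProd (A : Finset Λ) (s : Λ → Bool) : -1 ≤ spinProd A s := by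
  rcases spinProd_eq_one_or_eq_neg_one A s with h | h <;> norm_num [h]

variable [DecidableEq Λ]

lemma spinProd_mul_spinProd (A B : Finset Λ) (s : Λ → Bool) :
    spinProd A s * spinProd B s = spinProd (A ∆ B) s :=
  prod_mul_prod_eq_prod_symmDiff (spin_mul_self s) A B

lemma exists_spinProd_eq_prod_spinProd (S : Finset (Finset Λ)) :
    ∃ E : Finset Λ, ∀ s, ∏ A ∈ S, spinProd A s = spinProd E s := by
  induction S using Finset.induction_on with
  | empty => exact ⟨∅, fun s => by simp [spinProd]⟩
  | insert A S hA ih =>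
    obtain ⟨E, hE⟩ := ih
    exact ⟨A ∆ E, fun s => by rw [prod_insert hA, hE, spinProd_mul_spinProd]⟩

variable [Fintype Λ]

lemma sum_spinProd_nonneg (E : Finset Λ) : 0 ≤ ∑ s : Λ → Bool, spinProd E s := by
  have h : ∑ s : Λ → Bool, spinProd E s
      = ∏ p : Λ, ∑ b : Bool, if p ∈ E then (if b then (1 : ℝ) else -1) else 1 := by
    rw [Fintype.prod_sum]
    refine sum_congr rfl fun s _ => ?_
    rw [prod_ite_mem, univ_inter]
    rfl
  rw [h]
  exact prod_nonneg fun p _ => by split_ifs <;> simp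

lemma exp_sum_mul_spinProd (K : Finset Λ → ℝ) (s : Λ → Bool) :
    Real.exp (∑ A, K A * spinProd A s) = ∑ S ∈ (univ : Finset (Finset Λ)).powerset,
      ((∏ A ∈ S, Real.sinh (K A)) * ∏ A ∈ univ \ S, Real.cosh (K A)) *
        ∏ A ∈ S, spinProd A s := by
  rw [Real.exp_sum]
  simp_rw [fun A => Real.exp_mul_eq_sinh_mul_add_cosh (spinProd_eq_one_or_eq_neg_one A s) (K A),
    prod_add, prod_mul_distrib]
  exact sum_congr rfl fun S _ => by ring

theorem griffiths_first_inequality (K : Finset Λ → ℝ) (hK : ∀ A, 0 ≤ K A) (D : Finset Λ) :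
    0 ≤ ∑ s : Λ → Bool, spinProd D s * Real.exp (∑ A, K A * spinProd A s) := by
  simp_rw [exp_sum_mul_spinProd, mul_sum]
  rw [sum_comm]
  refine sum_nonneg fun S _ => ?_
  obtain ⟨E, hE⟩ := exists_spinProd_eq_prod_spinProd S
  simp_rw [hE, mul_left_comm (spinProd D _), ← mul_sum, spinProd_mul_spinProd]
  exact mul_nonneg (mul_nonneg (prod_nonneg fun A _ => Real.sinh_nonneg_iff.mpr (hK A))
    (prod_nonneg fun A _ => (Real.cosh_pos _).le)) (sum_spinProd_nonneg _)

lemma sum_mul_sum_sub_sum_mul_sum_eq (W : (Λ → Bool) → ℝ) (B C : Finset Λ) :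
    (∑ s, spinProd B s * spinProd C s * W s) * (∑ s, W s)
        - (∑ s, spinProd B s * W s) * (∑ s, spinProd C s * W s)
      = ∑ q, (1 - spinProd C q) *
          ∑ s, spinProd (B ∆ C) s * (W s * W (configMul s q)) := by
  calc _ = ∑ s, ∑ q, (spinProd B s * spinProd C s * W s * W (configMul s q)
          - spinProd B s * W s * (spinProd C (configMul s q) * W (configMul s q))) := by
        rw [sum_mul_sum, sum_mul_sum, ← sum_sub_distrib]
        refine sum_congr rfl fun s _ => ?_
        rw [← sum_sub_distrib]
        exact ((configMul_involutive s).bijective.sum_comp _).symm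
    _ = ∑ s, ∑ q, (1 - spinProd C q) * (spinProd (B ∆ C) s * (W s * W (configMul s q))) := by
        refine sum_congr rfl fun s _ => sum_congr rfl fun q _ => ?_
        rw [spinProd_configMul, ← spinProd_mul_spinProd]
        ring
    _ = _ := by
        rw [sum_comm]
        simp_rw [mul_sum]

lemma griffWeight_mul_griffWeight_configMul (β : ℝ) (J : Finset Λ → ℝ) (s q : Λ → Bool) :
    griffWeight β J s * griffWeight β J (configMul s q)
      = Real.exp (∑ A, β * J A * (1 + spinProd A q) * spinProd A s) := by
  rw [griffWeight, griffWeight, ← Real.exp_add, mul_sum, mul_sum, ← sum_add_distrib]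
  congr 1
  refine sum_congr rfl fun A _ => ?_
  change β * (J A * spinProd A s) + β * (J A * spinProd A (configMul s q)) = _
  rw [spinProd_configMul]
  ring

lemma griffExpect_sub_griffExpect_mul_griffExpect (β : ℝ) (J : Finset Λ → ℝ) (B C : Finset Λ) :
    griffExpect β J (fun σ => (∏ p ∈ B, σ p) * ∏ p ∈ C, σ p)
        - griffExpect β J (fun σ => ∏ p ∈ B, σ p) * griffExpect β J (fun σ => ∏ p ∈ C, σ p)
      = ((∑ s, spinProd B s * spinProd C s * griffWeight β J s) * (∑ s, griffWeight β J s)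
          - (∑ s, spinProd B s * griffWeight β J s) * (∑ s, spinProd C s * griffWeight β J s))
        / (∑ s, griffWeight β J s) ^ 2 := by
  have hZ : ∑ s, griffWeight β J s ≠ 0 :=
    (sum_pos (fun s _ => Real.exp_pos _) univ_nonempty).ne'
  simp only [griffExpect, spinProd]
  field_simp

end Griffiths

open Griffiths

theorem griffiths_second_inequality_general {Λ : Type*} [Fintype Λ] [DecidableEq Λ]
    (β : ℝ) (hβ : 0 ≤ β) (J : Finset Λ → ℝ) (hJ : ∀ A : Finset Λ, 0 ≤ J A)
    (B C : Finset Λ) :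
    0 ≤ griffExpect β J (fun σ => (∏ p ∈ B, σ p) * ∏ p ∈ C, σ p) -
        griffExpect β J (fun σ => ∏ p ∈ B, σ p) *
          griffExpect β J (fun σ => ∏ p ∈ C, σ p) := by
  rw [griffExpect_sub_griffExpect_mul_griffExpect, sum_mul_sum_sub_sum_mul_sum_eq]
  refine div_nonneg (sum_nonneg fun q _ => mul_nonneg (sub_nonneg.mpr (spinProd_le_one C q)) ?_)
    (sq_nonneg _)
  simp_rw [griffWeight_mul_griffWeight_configMul]
  exact griffiths_first_inequality _
    (fun A => mul_nonneg (mul_nonneg hβ (hJ A)) (by linarith [neg_one_le_spinProd A q])) _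

/-- **Second Griffiths (Kelly–Sherman) inequality**:
`⟨σ_B σ_C⟩ − ⟨σ_B⟩⟨σ_C⟩ ≥ 0` for ferromagnetic many-body interactions. -/
theorem griffiths_second_inequality {Λ : Type*} [Fintype Λ] [DecidableEq Λ] [Nonempty Λ]
    (β : ℝ) (hβ : 0 ≤ β) (J : Finset Λ → ℝ) (hJ : ∀ A : Finset Λ, 0 ≤ J A)
    (B C : Finset Λ) :
    0 ≤ griffExpect β J (fun σ => (∏ p ∈ B, σ p) * ∏ p ∈ C, σ p) -
        griffExpect β J (fun σ => ∏ p ∈ B, σ p) *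
          griffExpect β J (fun σ => ∏ p ∈ C, σ p) :=
  griffiths_second_inequality_general β hβ J hJ B C
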